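/- For the prism over the complete graph, K_n □ K₂ (n ≥ 2), the independence number equals 2 while the indicated domination number equals n; hence γᵢ(G) − α(G) can be arbitrarily large. -/

import Mathlib

open Finset

open scoped Classical

noncomputable section

namespace IndicatedDom

variable {V : Type*} [Fintype V]

/-- Closed neighborhood `N[v]` as a `Finset`. -/
def cnbhd (G : SimpleGraph V) (v : V) : Finset V :=
  insert v (G.neighborFinset v)

/-- `D` is a dominating set of `G`. -/
def Dominates (G : SimpleGraph V) (D : Finset V) : Prop :=
  ∀ u, ∃ v ∈ D, u ∈ cnbhd G v

/-- The set of vertices not dominated by `D`. -/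
def undom (G : SimpleGraph V) (D : Finset V) : Finset V :=
  univ.filter fun u => ∀ v ∈ D, u ∉ cnbhd G v

/-- Game value of the indicated domination game with a fuel parameter:
given the set `D` of vertices selected so far, Dominator indicates an
undominated vertex `u` (minimizing), Staller selects a vertex of `N[u]`
(maximizing); each selection counts one. -/
def giAux (G : SimpleGraph V) : ℕ → Finset V → ℕ
  | 0, _ => 0
  | (fuel+1), D =>
    if h : (undom G D).Nonempty then
      (undom G D).inf' h fun u =>
        (cnbhd G u).sup' ⟨u, Finset.mem_insert_self u _⟩ fun v => giAux G fuel (insert v D) + 1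
    else 0

/-- The indicated domination number `γᵢ(G)`. -/
def indicatedDomNum (G : SimpleGraph V) : ℕ :=
  giAux G (Fintype.card V) ∅

/-- Game value of the standard domination game with a fuel parameter:
`dom = true` means it is Dominator's turn (minimizing); legal moves are
vertices dominating at least one new vertex. -/
def gameAux (G : SimpleGraph V) : ℕ → Bool → Finset V → ℕ
  | 0, _, _ => 0
  | (fuel+1), dom, D =>
    if h : (univ.filter fun v => ∃ u ∈ cnbhd G v, u ∈ undom G D).Nonempty then
      if dom then
        (univ.filter fun v => ∃ u ∈ cnbhd G v, u ∈ undom G D).inf' h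
          fun v => gameAux G fuel false (insert v D) + 1
      else
        (univ.filter fun v => ∃ u ∈ cnbhd G v, u ∈ undom G D).sup' h
          fun v => gameAux G fuel true (insert v D) + 1
    else 0

/-- The game domination number `γ_g(G)` (Dominator starts). -/
def gameDomNum (G : SimpleGraph V) : ℕ :=
  gameAux G (Fintype.card V) true ∅

/-- A minimal dominating set. -/
def IsMinimalDominating (G : SimpleGraph V) (D : Finset V) : Prop :=
  Dominates G D ∧ ∀ D' ⊂ D, ¬ Dominates G D'

/-- The upper domination number `Γ(G)`. -/
def upperDomNum (G : SimpleGraph V) : ℕ :=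
  sSup {k | ∃ D : Finset V, IsMinimalDominating G D ∧ D.card = k}

/-- A dominating (Grundy) sequence: every vertex dominates something new,
and the whole sequence dominates `G`. -/
def IsDominatingSeq (G : SimpleGraph V) (l : List V) : Prop :=
  (∀ i : Fin l.length, ∃ u, u ∈ cnbhd G (l.get i) ∧
      ∀ j : Fin l.length, (j : ℕ) < (i : ℕ) → u ∉ cnbhd G (l.get j)) ∧
    Dominates G l.toFinset

/-- The Grundy domination number `γ_gr(G)`. -/
def grundyDomNum (G : SimpleGraph V) : ℕ :=
  sSup {k | ∃ l : List V, IsDominatingSeq G l ∧ l.length = k}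

/-- The independence number `α(G)`. -/
def indepNum (G : SimpleGraph V) : ℕ :=
  sSup {k | ∃ S : Finset V, (∀ x ∈ S, ∀ y ∈ S, ¬ G.Adj x y) ∧ S.card = k}

/-- `S` is irredundant: every `x ∈ S` has a private neighbor w.r.t. `S`. -/
def Irredundant (G : SimpleGraph V) (S : Finset V) : Prop :=
  ∀ x ∈ S, ∃ w, (∃ v ∈ S, w ∈ cnbhd G v) ∧ ¬ ∃ v ∈ S.erase x, w ∈ cnbhd G v

/-- The upper irredundance number `IR(G)`. -/
def upperIrredNum (G : SimpleGraph V) : ℕ :=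
  sSup {k | ∃ S : Finset V, Irredundant G S ∧ (∀ T, S ⊂ T → ¬ Irredundant G T) ∧ S.card = k}

/-- The star `K_{1,n}` with center `0`. -/
def starGraph (n : ℕ) : SimpleGraph (Fin (n+1)) where
  Adj a b := a ≠ b ∧ (a = 0 ∨ b = 0)
  symm := by constructor; intro a b h; exact ⟨h.1.symm, h.2.symm⟩
  loopless := by constructor; intro a h; exact h.1 rfl

/-- Two copies of `K_n` with a matching joining corresponding vertices of
index `≥ 1` (i.e. `K_n □ K₂` minus the matching edge at index `0`). -/
def Hgraph (n : ℕ) : SimpleGraph (Fin n × Bool) where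
  Adj a b := (a.2 = b.2 ∧ a.1 ≠ b.1) ∨ (a.2 ≠ b.2 ∧ a.1 = b.1 ∧ (a.1 : ℕ) ≠ 0)
  symm := by
    constructor
    rintro ⟨i, s⟩ ⟨j, t⟩ (⟨h1, h2⟩ | ⟨h1, h2, h3⟩)
    · exact Or.inl ⟨h1.symm, h2.symm⟩
    · exact Or.inr ⟨h1.symm, h2.symm, h2 ▸ h3⟩
  loopless := by constructor; rintro ⟨i, s⟩ (⟨_, h⟩ | ⟨h, _⟩) <;> exact h rfl

/-- The `k`-th power of the path on `n` vertices: `i ~ j` iff `1 ≤ |i-j| ≤ k`. -/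
def pathPow (n k : ℕ) : SimpleGraph (Fin n) where
  Adj i j := i ≠ j ∧ (i : ℕ) ≤ (j : ℕ) + k ∧ (j : ℕ) ≤ (i : ℕ) + k
  symm := by constructor; intro i j h; exact ⟨h.1.symm, h.2.2, h.2.1⟩
  loopless := by constructor; intro i h; exact h.1 rfl

/-- The cycle on `m` vertices (for `m ≥ 3`), modeled on `ZMod m`. -/
def cyc (m : ℕ) : SimpleGraph (ZMod m) where
  Adj i j := i ≠ j ∧ (i + 1 = j ∨ j + 1 = i)
  symm := by constructor; intro i j h; exact ⟨h.1.symm, h.2.symm⟩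
  loopless := by constructor; intro i h; exact h.1 rfl

/-- The graph `D₁`: a `9`-cycle `x₁x₂…x₉` plus chords `x₁x₃, x₄x₆, x₇x₉`
(vertex `xᵢ` is represented by `i - 1 : ZMod 9`). -/
def DGraph : SimpleGraph (ZMod 9) where
  Adj i j := i ≠ j ∧ (i + 1 = j ∨ j + 1 = i ∨
    (i = 0 ∧ j = 2) ∨ (i = 2 ∧ j = 0) ∨ (i = 3 ∧ j = 5) ∨ (i = 5 ∧ j = 3) ∨
    (i = 6 ∧ j = 8) ∨ (i = 8 ∧ j = 6))
  symm := by constructor; intro i j h; refine ⟨h.1.symm, ?_⟩; tauto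
  loopless := by constructor; intro i h; exact h.1 rfl

/-!
In `K_n □ K₂` the closed neighbourhood of `(i, s)` is its column `i` together with its row `s`,
so an independent set has at most one vertex per row, and after any first selection exactly the
`n - 1` vertices avoiding its row and column stay undominated. Since every selection dominates
the indicated vertex, the game then lasts at most `n - 1` further moves. Conversely, if Staller
answers the first indication with the indicated vertex itself and afterwards always selects, in
that same row, the vertex in the column of the indicated one, each move dominates only the
indicated vertex, so all `n - 1` further moves are forced.
-/

open SimpleGraph

lemma indepNum_eq {V : Type*} {G : SimpleGraph V} {k : ℕ}
    (hle : ∀ S : Finset V, (∀ x ∈ S, ∀ y ∈ S, ¬ G.Adj x y) → #S ≤ k)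
    (S : Finset V) (hS : ∀ x ∈ S, ∀ y ∈ S, ¬ G.Adj x y) (hSk : #S = k) : indepNum G = k := by
  have hbdd : ∀ m ∈ {m | ∃ S : Finset V, (∀ x ∈ S, ∀ y ∈ S, ¬ G.Adj x y) ∧ #S = m}, m ≤ k := by
    rintro _ ⟨T, hT, rfl⟩
    exact hle T hT
  exact le_antisymm (csSup_le ⟨k, S, hS, hSk⟩ hbdd) (le_csSup ⟨k, hbdd⟩ ⟨S, hS, hSk⟩)

section Game

variable {V : Type*} [Fintype V] {G : SimpleGraph V}

lemma mem_cnbhd {u v : V} : u ∈ cnbhd G v ↔ u = v ∨ G.Adj v u := by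
  simp [cnbhd]

lemma mem_cnbhd_comm {u v : V} : u ∈ cnbhd G v ↔ v ∈ cnbhd G u := by
  simp only [mem_cnbhd, G.adj_comm, eq_comm]

lemma mem_undom {D : Finset V} {u : V} : u ∈ undom G D ↔ ∀ v ∈ D, u ∉ cnbhd G v := by
  simp [undom]

lemma giAux_succ_le {fuel k : ℕ} {D : Finset V} {u : V} (hu : u ∈ undom G D)
    (h : ∀ v ∈ cnbhd G u, giAux G fuel (insert v D) + 1 ≤ k) : giAux G (fuel + 1) D ≤ k := by
  rw [giAux, dif_pos ⟨u, hu⟩]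
  exact (Finset.inf'_le _ hu).trans (Finset.sup'_le _ _ h)

lemma le_giAux_succ {fuel k : ℕ} {D : Finset V} (hD : (undom G D).Nonempty)
    (h : ∀ u ∈ undom G D, ∃ v ∈ cnbhd G u, k ≤ giAux G fuel (insert v D) + 1) :
    k ≤ giAux G (fuel + 1) D := by
  rw [giAux, dif_pos hD]
  refine Finset.le_inf' _ _ fun u hu => ?_
  obtain ⟨v, hv, hk⟩ := h u hu
  exact hk.trans (Finset.le_sup' (fun v => giAux G fuel (insert v D) + 1) hv)

lemma card_undom_le_card_undom_insert_add_one {D : Finset V} {u v : V} (hu : u ∈ undom G D)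
    (h : ∀ w ∈ undom G D, w ≠ u → w ∈ undom G (insert v D)) :
    #(undom G D) ≤ #(undom G (insert v D)) + 1 := by
  have hsub : (undom G D).erase u ⊆ undom G (insert v D) := fun w hw =>
    h w (Finset.mem_of_mem_erase hw) (Finset.ne_of_mem_erase hw)
  have := Finset.card_le_card hsub
  rw [Finset.card_erase_of_mem hu] at this
  omega

lemma card_undom_insert_lt {D : Finset V} {u v : V} (hu : u ∈ undom G D)
    (hv : v ∈ cnbhd G u) : #(undom G (insert v D)) < #(undom G D) := by
  refine Finset.card_lt_card ⟨fun w hw => ?_, fun hsub => ?_⟩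
  · exact mem_undom.mpr fun x hx => mem_undom.mp hw x (Finset.mem_insert_of_mem hx)
  · exact mem_undom.mp (hsub hu) v (Finset.mem_insert_self v D) (mem_cnbhd_comm.mp hv)

lemma giAux_le_card_undom : ∀ (fuel : ℕ) (D : Finset V), giAux G fuel D ≤ #(undom G D)
  | 0, _ => Nat.zero_le _
  | fuel + 1, D => by
    obtain ⟨u, hu⟩ | hD := (undom G D).eq_empty_or_nonempty.symm
    · refine giAux_succ_le hu fun v hv => ?_
      have := giAux_le_card_undom fuel (insert v D)
      have := card_undom_insert_lt hu hv
      omega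
    · rw [giAux, dif_neg (Finset.not_nonempty_iff_eq_empty.mpr hD)]
      exact Nat.zero_le _

/-- `hP` is a Staller strategy: an answer to every indication that keeps the invariant `P` and
dominates at most one new vertex. -/
lemma min_card_undom_le_giAux (P : Finset V → Prop)
    (hP : ∀ D, P D → ∀ u ∈ undom G D, ∃ v ∈ cnbhd G u,
      P (insert v D) ∧ #(undom G D) ≤ #(undom G (insert v D)) + 1) :
    ∀ (fuel : ℕ) (D : Finset V), P D → min fuel #(undom G D) ≤ giAux G fuel D
  | 0, _, _ => by simp
  | fuel + 1, D, hD => by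
    obtain hne | hempty := (undom G D).eq_empty_or_nonempty.symm
    · refine le_giAux_succ hne fun u hu => ?_
      obtain ⟨v, hv, hPv, hcard⟩ := hP D hD u hu
      have := min_card_undom_le_giAux P hP fuel (insert v D) hPv
      exact ⟨v, hv, by omega⟩
    · simp [hempty]

end Game

lemma boxProd_top_adj {α β : Type*} {x y : α × β} :
    ((⊤ : SimpleGraph α) □ (⊤ : SimpleGraph β)).Adj x y ↔ x ≠ y ∧ (x.1 = y.1 ∨ x.2 = y.2) := by
  obtain ⟨a, b⟩ := x
  obtain ⟨c, d⟩ := y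
  simp only [boxProd_adj, top_adj, ne_eq, Prod.mk.injEq]
  tauto

lemma card_le_of_forall_not_adj_boxProd_top {α β : Type*} [Fintype β] {S : Finset (α × β)}
    (hS : ∀ x ∈ S, ∀ y ∈ S, ¬ ((⊤ : SimpleGraph α) □ (⊤ : SimpleGraph β)).Adj x y) :
    #S ≤ Fintype.card β := by
  refine (Finset.card_le_card_of_injOn Prod.snd (fun _ _ => Finset.mem_univ _) ?_).trans_eq
    Finset.card_univ
  intro x hx y hy hxy
  by_contra hne
  exact hS x hx y hy (boxProd_top_adj.mpr ⟨hne, Or.inr hxy⟩)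

section Rook

variable {α β : Type*} [Fintype α] [Fintype β]

lemma mem_cnbhd_boxProd_top {u v : α × β} :
    u ∈ cnbhd ((⊤ : SimpleGraph α) □ (⊤ : SimpleGraph β)) v ↔ u.1 = v.1 ∨ u.2 = v.2 := by
  rw [mem_cnbhd, boxProd_top_adj]
  obtain rfl | huv := eq_or_ne u v
  · simp
  · simp only [huv, eq_comm (a := v.1), eq_comm (a := v.2), ne_eq, false_or]
    tauto

lemma mem_undom_boxProd_top {D : Finset (α × β)} {u : α × β} :
    u ∈ undom ((⊤ : SimpleGraph α) □ (⊤ : SimpleGraph β)) D ↔ ∀ v ∈ D, u.1 ≠ v.1 ∧ u.2 ≠ v.2 := by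
  simp only [mem_undom, mem_cnbhd_boxProd_top, not_or]

lemma card_undom_singleton_boxProd_top (v : α × β) :
    #(undom ((⊤ : SimpleGraph α) □ (⊤ : SimpleGraph β)) {v}) =
      (Fintype.card α - 1) * (Fintype.card β - 1) := by
  have : undom ((⊤ : SimpleGraph α) □ (⊤ : SimpleGraph β)) {v} =
      (Finset.univ.erase v.1) ×ˢ (Finset.univ.erase v.2) := by
    ext u
    simp [mem_undom_boxProd_top]
  simp [this, Finset.card_erase_of_mem]

end Rook

section Prism

variable {α : Type*} [Fintype α]

lemma indepNum_boxProd_top_fin_two (hα : 2 ≤ Fintype.card α) :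
    indepNum ((⊤ : SimpleGraph α) □ (⊤ : SimpleGraph (Fin 2))) = 2 := by
  obtain ⟨a, a', ha⟩ := Fintype.exists_pair_of_one_lt_card hα
  refine indepNum_eq (fun S hS => (card_le_of_forall_not_adj_boxProd_top hS).trans_eq
    (Fintype.card_fin 2)) {(a, 0), (a', 1)} ?_ (Finset.card_pair (by simp))
  simp [ha, ha.symm]

/-- Once `D` lies in row `b`, every undominated vertex lies in the other row, so answering the
indication of `u` with `(u.1, b)` dominates only `u`. -/
lemma min_card_undom_le_giAux_of_row (b : Fin 2) (fuel : ℕ) (D : Finset (α × Fin 2))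
    (hD : D.Nonempty) (hrow : ∀ v ∈ D, v.2 = b) :
    min fuel #(undom ((⊤ : SimpleGraph α) □ (⊤ : SimpleGraph (Fin 2))) D) ≤
      giAux ((⊤ : SimpleGraph α) □ (⊤ : SimpleGraph (Fin 2))) fuel D := by
  refine min_card_undom_le_giAux (fun D => D.Nonempty ∧ ∀ v ∈ D, v.2 = b) ?_ fuel D ⟨hD, hrow⟩
  rintro D ⟨⟨d, hd⟩, hrow⟩ u hu
  have off_row : ∀ w ∈ undom _ D, w.2 ≠ b := fun w hw =>
    hrow d hd ▸ (mem_undom_boxProd_top.mp hw d hd).2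
  refine ⟨(u.1, b), mem_cnbhd_boxProd_top.mpr (Or.inl rfl), ⟨by simp, ?_⟩,
    card_undom_le_card_undom_insert_add_one hu fun w hw hwu => ?_⟩
  · simpa [forall_eq_or_imp] using hrow
  have same_row : w.2 = u.2 := by
    have := off_row w hw
    have := off_row u hu
    omega
  have hw' := mem_undom_boxProd_top.mp hw
  simp only [mem_undom_boxProd_top, Finset.mem_insert, forall_eq_or_imp]
  exact ⟨⟨fun h => hwu (Prod.ext h same_row), off_row w hw⟩, hw'⟩

lemma indicatedDomNum_boxProd_top_fin_two :
    indicatedDomNum ((⊤ : SimpleGraph α) □ (⊤ : SimpleGraph (Fin 2))) = Fintype.card α := by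
  cases isEmpty_or_nonempty α
  · simp [indicatedDomNum, giAux]
  have hα : 0 < Fintype.card α := Fintype.card_pos
  have hcard : Fintype.card (α × Fin 2) = (2 * Fintype.card α - 1) + 1 := by
    simp only [Fintype.card_prod, Fintype.card_fin]
    omega
  have hfirst (v : α × Fin 2) :
      #(undom ((⊤ : SimpleGraph α) □ (⊤ : SimpleGraph (Fin 2))) {v}) = Fintype.card α - 1 := by
    simp [card_undom_singleton_boxProd_top]
  have hundom :
      (Classical.arbitrary α, 0) ∈ undom ((⊤ : SimpleGraph α) □ (⊤ : SimpleGraph (Fin 2))) ∅ := by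
    simp [mem_undom]
  rw [indicatedDomNum, hcard]
  apply le_antisymm
  · refine giAux_succ_le hundom fun v _ => ?_
    have := (giAux_le_card_undom (2 * Fintype.card α - 1) {v}).trans_eq (hfirst v)
    simp only [Finset.insert_empty]
    omega
  · refine le_giAux_succ ⟨_, hundom⟩ fun u _ => ⟨u, mem_cnbhd.mpr (Or.inl rfl), ?_⟩
    have := min_card_undom_le_giAux_of_row u.2 (2 * Fintype.card α - 1) {u}
      (Finset.singleton_nonempty u) (by simp)
    rw [hfirst] at this
    simp only [Finset.insert_empty]
    omega

end Prism

/-- for the prism `K_n □ K₂` (`n ≥ 2`),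
`α = 2` while `γᵢ = n`. -/
theorem stmt19 (n : ℕ) (hn : 2 ≤ n) :
    indepNum ((⊤ : SimpleGraph (Fin n)).boxProd (⊤ : SimpleGraph (Fin 2))) = 2 ∧
      indicatedDomNum ((⊤ : SimpleGraph (Fin n)).boxProd (⊤ : SimpleGraph (Fin 2))) = n :=
  ⟨indepNum_boxProd_top_fin_two (by simpa using hn),
    by simpa using indicatedDomNum_boxProd_top_fin_two (α := Fin n)⟩

end IndicatedDom
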